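/- arXiv:1905.09884 — 2 statements merged into one kernel-verified Lean document; each statement's English description precedes it below -/
import Mathlib

section
/- Let v, w ∈ ℝ^m with w ≥ v componentwise and let k ≤ m. Then max { (1−u)·v + u·w : u ∈ {0,1}^m, ∑ᵢ uᵢ ≤ k } = ∑ᵢ vᵢ + s_k(w − v), where s_k denotes the sum of the k largest entries. -/
open Finset

/-- Sum of the `k` largest entries of `z ∈ ℝ^m`. -/
noncomputable def topkSum {m : ℕ} (k : ℕ) (hk : k ≤ m) (z : Fin m → ℝ) : ℝ :=
  ((Finset.univ : Finset (Fin m)).powersetCard k).sup'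
    (Finset.powersetCard_nonempty.mpr (by simpa using hk)) (fun I => ∑ i ∈ I, z i)

/-!
A Boolean vector `u` is the indicator of `S = {i | u i = 1}`, and since
`(1 - u i) * v i + u i * w i = v i + u i * (w i - v i)` its objective is
`∑ v + ∑_{i ∈ S} (w - v)`. The increments `w - v` are nonnegative, so enlarging `S` to exactly
`k` elements does not decrease the objective, and the best `k`-element set attains `s_k(w - v)`.
-/

section Indicator

variable {ι : Type*} [Fintype ι] [DecidableEq ι]

lemma exists_eq_ite_mem_of_zero_or_one {u : ι → ℝ} (hu : ∀ i, u i = 0 ∨ u i = 1) :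
    ∃ S : Finset ι, u = fun i => if i ∈ S then 1 else 0 := by
  refine ⟨univ.filter (u · = 1), funext fun i => ?_⟩
  rcases hu i with h | h <;> simp [h]

lemma sum_ite_mem_one (S : Finset ι) : ∑ i, (if i ∈ S then (1 : ℝ) else 0) = #S := by
  simp

lemma sum_one_sub_ite_mul_add_ite_mul (S : Finset ι) (v w : ι → ℝ) :
    ∑ i, ((1 - (if i ∈ S then (1 : ℝ) else 0)) * v i
        + (if i ∈ S then (1 : ℝ) else 0) * w i) = ∑ i, v i + ∑ i ∈ S, (w i - v i) := by
  have pointwise (i : ι) : (1 - (if i ∈ S then (1 : ℝ) else 0)) * v i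
      + (if i ∈ S then (1 : ℝ) else 0) * w i = v i + if i ∈ S then w i - v i else 0 := by
    split_ifs <;> ring
  simp only [pointwise, sum_add_distrib, sum_ite_mem, univ_inter]

end Indicator

section TopkSum

variable {m k : ℕ} (hk : k ≤ m) (z : Fin m → ℝ)

lemma exists_card_eq_sum_eq_topkSum :
    ∃ I : Finset (Fin m), #I = k ∧ ∑ i ∈ I, z i = topkSum k hk z := by
  obtain ⟨I, hI, hsup⟩ := exists_mem_eq_sup'
    (powersetCard_nonempty (s := univ).mpr (by simpa using hk)) (fun I => ∑ i ∈ I, z i)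
  exact ⟨I, (mem_powersetCard.mp hI).2, hsup.symm⟩

lemma sum_le_topkSum_of_card_le (hz : ∀ i, 0 ≤ z i) {S : Finset (Fin m)} (hS : #S ≤ k) :
    ∑ i ∈ S, z i ≤ topkSum k hk z := by
  obtain ⟨I, hSI, hI⟩ := Finset.exists_superset_card_eq hS (by simpa using hk)
  calc ∑ i ∈ S, z i ≤ ∑ i ∈ I, z i := sum_le_sum_of_subset_of_nonneg hSI fun i _ _ => hz i
    _ ≤ topkSum k hk z :=
      le_sup' (fun J => ∑ i ∈ J, z i) (mem_powersetCard.mpr ⟨subset_univ I, hI⟩)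

end TopkSum

/-- Boolean reformulation of sparse Bernoulli naive Bayes: for `w ≥ v`
componentwise, `max { (1-u)·v + u·w : u ∈ {0,1}^m, ∑ u i ≤ k }
= ∑ v + s_k(w - v)`. -/
theorem boolean_reformulation (m k : ℕ) (hk : k ≤ m) (v w : Fin m → ℝ)
    (hvw : ∀ i, v i ≤ w i) :
    IsGreatest {t : ℝ | ∃ u : Fin m → ℝ, (∀ i, u i = 0 ∨ u i = 1) ∧
        (∑ i, u i) ≤ k ∧ t = ∑ i, ((1 - u i) * v i + u i * w i)}
      (∑ i, v i + topkSum k hk (fun i => w i - v i)) := by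
  constructor
  · obtain ⟨I, hI, hsum⟩ := exists_card_eq_sum_eq_topkSum hk (fun i => w i - v i)
    refine ⟨fun i => if i ∈ I then 1 else 0, fun i => by by_cases i ∈ I <;> simp [*],
      ?_, ?_⟩
    · rw [sum_ite_mem_one, hI]
    · rw [sum_one_sub_ite_mul_add_ite_mul, hsum]
  · rintro t ⟨u, hu, huk, rfl⟩
    obtain ⟨S, rfl⟩ := exists_eq_ite_mem_of_zero_or_one hu
    rw [sum_ite_mem_one, Nat.cast_le] at huk
    rw [sum_one_sub_ite_mul_add_ite_mul]
    gcongr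
    exact sum_le_topkSum_of_card_le hk _ (fun i => sub_nonneg.mpr (hvw i)) huk
end

section
/- Consider the sparse Bernoulli naive Bayes problem: maximize ∑ᵢ [f⁺ᵢ log θ⁺ᵢ + (n₊ − f⁺ᵢ) log(1−θ⁺ᵢ) + f⁻ᵢ log θ⁻ᵢ + (n₋ − f⁻ᵢ) log(1−θ⁻ᵢ)] over θ⁺, θ⁻ ∈ (0,1)^m subject to at most k indices i having θ⁺ᵢ ≠ θ⁻ᵢ. Assume 0 < f⁺ᵢ < n₊ and 0 < f⁻ᵢ < n₋ for all i and set n = n₊ + n₋. Then the optimal value equals ∑ᵢ vᵢ + s_k(w − v), where vᵢ = (f⁺ᵢ+f⁻ᵢ) log((f⁺ᵢ+f⁻ᵢ)/n) + (n−f⁺ᵢ−f⁻ᵢ) log(1 − (f⁺ᵢ+f⁻ᵢ)/n), wᵢ = f⁺ᵢ log(f⁺ᵢ/n₊) + (n₊−f⁺ᵢ) log(1 − f⁺ᵢ/n₊) + f⁻ᵢ log(f⁻ᵢ/n₋) + (n₋−f⁻ᵢ) log(1 − f⁻ᵢ/n₋), and s_k denotes the sum of the k largest entries. -/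
open Finset Real Set
open scoped Classical

/-!
The objective is separable. In coordinate `i` the two Bernoulli log-likelihoods are
maximized independently at the class frequencies `f±ᵢ/n±`, with value `wᵢ` (Gibbs'
inequality); when `θ⁺ᵢ = θ⁻ᵢ` is forced they add up to one Bernoulli log-likelihood of the
pooled counts, maximized at `(f⁺ᵢ+f⁻ᵢ)/n` with value `vᵢ ≤ wᵢ`. Hence the optimum pays `vᵢ`
everywhere and spends the `k` free coordinates where the gain `wᵢ − vᵢ` is largest.
-/

theorem mul_log_le_mul_log_div_add {a c x : ℝ} (ha : 0 < a) (hc : 0 < c) (hx : 0 < x) :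
    a * log x ≤ a * log (a / c) + (c * x - a) :=
  calc a * log x = a * log (a / c) + a * log (c * x / a) := by
        rw [← mul_add, ← log_mul (by positivity) (by positivity)]
        field_simp
    _ ≤ a * log (a / c) + a * (c * x / a - 1) := by
        gcongr
        exact log_le_sub_one_of_pos (by positivity)
    _ = a * log (a / c) + (c * x - a) := by field_simp

/-- Log-likelihood of `a` successes in `b` Bernoulli trials with success probability `θ`. -/
noncomputable def bernoulliLogLik (a b θ : ℝ) : ℝ :=
  a * log θ + (b - a) * log (1 - θ)

theorem bernoulliLogLik_add_add (a₁ b₁ a₂ b₂ θ : ℝ) :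
    bernoulliLogLik a₁ b₁ θ + bernoulliLogLik a₂ b₂ θ =
      bernoulliLogLik (a₁ + a₂) (b₁ + b₂) θ := by
  unfold bernoulliLogLik
  ring

theorem bernoulliLogLik_le_div {a b θ : ℝ} (ha : 0 < a) (hab : a < b)
    (hθ : θ ∈ Ioo (0 : ℝ) 1) :
    bernoulliLogLik a b θ ≤ bernoulliLogLik a b (a / b) := by
  have hb : 0 < b := ha.trans hab
  have hsucc := mul_log_le_mul_log_div_add ha hb hθ.1
  have hfail := mul_log_le_mul_log_div_add (sub_pos.2 hab) hb (sub_pos.2 hθ.2)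
  have hcompl : 1 - a / b = (b - a) / b := by field_simp
  unfold bernoulliLogLik
  rw [hcompl]
  linarith

theorem isGreatest_bernoulliLogLik {a b : ℝ} (ha : 0 < a) (hab : a < b) :
    IsGreatest (bernoulliLogLik a b '' Ioo 0 1) (bernoulliLogLik a b (a / b)) := by
  have hb : 0 < b := ha.trans hab
  refine ⟨mem_image_of_mem _ ⟨by positivity, (div_lt_one hb).2 hab⟩, ?_⟩
  rintro _ ⟨θ, hθ, rfl⟩
  exact bernoulliLogLik_le_div ha hab hθ

theorem isGreatest_image2_add {α β γ : Type*} [Add γ] [Preorder γ] [AddLeftMono γ]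
    [AddRightMono γ] {f : α → γ} {g : β → γ} {s : Set α} {t : Set β} {a b : γ}
    (ha : IsGreatest (f '' s) a) (hb : IsGreatest (g '' t) b) :
    IsGreatest (image2 (fun x y => f x + g y) s t) (a + b) := by
  have hsum :=
    ha.image2 (f := (· + ·)) (fun _ => add_left_mono) (fun _ => add_right_mono) hb
  rwa [image2_image_left, image2_image_right] at hsum

theorem sum_ite_mem_eq_sum_add_sum_sub {ι M : Type*} [Fintype ι] [DecidableEq ι]
    [AddCommGroup M] (I : Finset ι) (w v : ι → M) :
    ∑ i, (if i ∈ I then w i else v i) = ∑ i, v i + ∑ i ∈ I, (w i - v i) := by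
  calc ∑ i, (if i ∈ I then w i else v i)
      = ∑ i, (v i + if i ∈ I then w i - v i else 0) :=
        sum_congr rfl fun i _ => by split_ifs <;> abel
    _ = ∑ i, v i + ∑ i ∈ I, (w i - v i) := by
        rw [sum_add_distrib, sum_ite_mem, Finset.univ_inter]

section TopkSum

variable {m k : ℕ} (hk : k ≤ m)

theorem exists_card_eq_topkSum_eq (z : Fin m → ℝ) :
    ∃ I : Finset (Fin m), I.card = k ∧ topkSum k hk z = ∑ i ∈ I, z i := by
  obtain ⟨I, hI, hmax⟩ := exists_mem_eq_sup' _ (fun I : Finset (Fin m) => ∑ i ∈ I, z i)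
  exact ⟨I, (mem_powersetCard.1 hI).2, hmax⟩

theorem sum_le_topkSum {z : Fin m → ℝ} (hz : ∀ i, 0 ≤ z i) {S : Finset (Fin m)}
    (hS : S.card ≤ k) : ∑ i ∈ S, z i ≤ topkSum k hk z := by
  obtain ⟨U, hSU, -, hU⟩ := exists_subsuperset_card_eq (subset_univ S) hS (by simpa using hk)
  calc ∑ i ∈ S, z i ≤ ∑ i ∈ U, z i := sum_le_sum_of_subset_of_nonneg hSU fun i _ _ => hz i
    _ ≤ topkSum k hk z := le_sup' (fun I => ∑ i ∈ I, z i) (mem_powersetCard.2 ⟨subset_univ U, hU⟩)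

end TopkSum

def sparsePairValues {m : ℕ} {α : Type*} (P : Set α) (g : Fin m → α → α → ℝ) (k : ℕ) :
    Set ℝ :=
  {t | ∃ θp θm : Fin m → α, (∀ i, θp i ∈ P) ∧ (∀ i, θm i ∈ P) ∧
    (univ.filter fun i => θp i ≠ θm i).card ≤ k ∧ t = ∑ i, g i (θp i) (θm i)}

theorem isGreatest_sparsePairValues {m k : ℕ} (hk : k ≤ m) {α : Type*} {P : Set α}
    {g : Fin m → α → α → ℝ} {v w : Fin m → ℝ}
    (hv : ∀ i, IsGreatest ((fun x => g i x x) '' P) (v i))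
    (hw : ∀ i, IsGreatest (image2 (g i) P P) (w i)) :
    IsGreatest (sparsePairValues P g k) (∑ i, v i + topkSum k hk fun i => w i - v i) := by
  choose x hxP hx using fun i => (hv i).1
  choose xw hxwP yw hywP hxyw using fun i => (hw i).1
  have hvw i : v i ≤ w i := hx i ▸ (hw i).2 ⟨x i, hxP i, x i, hxP i, rfl⟩
  constructor
  · obtain ⟨I, hI, hImax⟩ := exists_card_eq_topkSum_eq hk fun i => w i - v i
    refine ⟨fun i => if i ∈ I then xw i else x i, fun i => if i ∈ I then yw i else x i,
      fun i => ?_, fun i => ?_, ?_, ?_⟩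
    · dsimp only
      split_ifs
      exacts [hxwP i, hxP i]
    · dsimp only
      split_ifs
      exacts [hywP i, hxP i]
    · refine le_of_le_of_eq (card_le_card fun i hi => ?_) hI
      by_contra hiI
      simp [hiI] at hi
    · rw [hImax, ← sum_ite_mem_eq_sum_add_sum_sub]
      refine sum_congr rfl fun i _ => ?_
      dsimp only
      split_ifs
      exacts [(hxyw i).symm, (hx i).symm]
  · rintro t ⟨θp, θm, hθp, hθm, hcard, rfl⟩
    set S := univ.filter fun i => θp i ≠ θm i
    calc ∑ i, g i (θp i) (θm i) ≤ ∑ i, (if i ∈ S then w i else v i) := by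
          refine sum_le_sum fun i _ => ?_
          split_ifs with hi
          · exact (hw i).2 ⟨θp i, hθp i, θm i, hθm i, rfl⟩
          · have hEq : θp i = θm i := by simpa [S] using hi
            exact (hv i).2 ⟨θp i, hθp i, by rw [hEq]⟩
      _ = ∑ i, v i + ∑ i ∈ S, (w i - v i) := sum_ite_mem_eq_sum_add_sum_sub S w v
      _ ≤ ∑ i, v i + topkSum k hk fun i => w i - v i :=
          add_le_add_right (sum_le_topkSum hk (fun i => sub_nonneg.2 (hvw i)) hcard) _

theorem sparse_bernoulli_nb_general (m k : ℕ) (hk : k ≤ m) (np nm : ℝ)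
    (fp fm : Fin m → ℝ)
    (hfp : ∀ i, 0 < fp i ∧ fp i < np) (hfm : ∀ i, 0 < fm i ∧ fm i < nm) :
    let n := np + nm
    let v : Fin m → ℝ := fun i =>
      (fp i + fm i) * Real.log ((fp i + fm i) / n) +
        (n - fp i - fm i) * Real.log (1 - (fp i + fm i) / n)
    let w : Fin m → ℝ := fun i =>
      fp i * Real.log (fp i / np) + (np - fp i) * Real.log (1 - fp i / np) +
        (fm i * Real.log (fm i / nm) + (nm - fm i) * Real.log (1 - fm i / nm))
    IsGreatest {t : ℝ | ∃ θp θm : Fin m → ℝ,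
        (∀ i, θp i ∈ Ioo (0 : ℝ) 1) ∧ (∀ i, θm i ∈ Ioo (0 : ℝ) 1) ∧
        (Finset.univ.filter (fun i => θp i ≠ θm i)).card ≤ k ∧
        t = ∑ i, (fp i * Real.log (θp i) + (np - fp i) * Real.log (1 - θp i) +
          (fm i * Real.log (θm i) + (nm - fm i) * Real.log (1 - θm i)))}
      (∑ i, v i + topkSum k hk (fun i => w i - v i)) := by
  intro n v w
  refine isGreatest_sparsePairValues (P := Ioo 0 1) (g := fun i x y =>
    bernoulliLogLik (fp i) np x + bernoulliLogLik (fm i) nm y) hk (fun i => ?_) (fun i => ?_)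
  · have hpool := isGreatest_bernoulliLogLik (add_pos (hfp i).1 (hfm i).1)
      (add_lt_add (hfp i).2 (hfm i).2)
    simp only [bernoulliLogLik_add_add]
    convert hpool using 1
    simp only [v, n, bernoulliLogLik, sub_sub]
  · exact isGreatest_image2_add (isGreatest_bernoulliLogLik (hfp i).1 (hfp i).2)
      (isGreatest_bernoulliLogLik (hfm i).1 (hfm i).2)

/-- Sparse Bernoulli naive Bayes: the optimal value of the cardinality
constrained maximum likelihood problem equals `∑ v + s_k(w - v)`. -/
theorem sparse_bernoulli_nb (m k : ℕ) (hk : k ≤ m) (np nm : ℝ)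
    (fp fm : Fin m → ℝ) (hnp : 0 < np) (hnm : 0 < nm)
    (hfp : ∀ i, 0 < fp i ∧ fp i < np) (hfm : ∀ i, 0 < fm i ∧ fm i < nm) :
    let n := np + nm
    let v : Fin m → ℝ := fun i =>
      (fp i + fm i) * Real.log ((fp i + fm i) / n) +
        (n - fp i - fm i) * Real.log (1 - (fp i + fm i) / n)
    let w : Fin m → ℝ := fun i =>
      fp i * Real.log (fp i / np) + (np - fp i) * Real.log (1 - fp i / np) +
        (fm i * Real.log (fm i / nm) + (nm - fm i) * Real.log (1 - fm i / nm))
    IsGreatest {t : ℝ | ∃ θp θm : Fin m → ℝ,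
        (∀ i, θp i ∈ Ioo (0 : ℝ) 1) ∧ (∀ i, θm i ∈ Ioo (0 : ℝ) 1) ∧
        (Finset.univ.filter (fun i => θp i ≠ θm i)).card ≤ k ∧
        t = ∑ i, (fp i * Real.log (θp i) + (np - fp i) * Real.log (1 - θp i) +
          (fm i * Real.log (θm i) + (nm - fm i) * Real.log (1 - θm i)))}
      (∑ i, v i + topkSum k hk (fun i => w i - v i)) :=
  sparse_bernoulli_nb_general m k hk np nm fp fm hfp hfm
end
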